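/- Let Δ ∈ (0, π/2), η > 0, a ∈ ℝ, b ∈ (a, ∞], h : [a,b) → ℝ and φ : (a,b) → ℂ with: h(x) > h(a) for all x ∈ (a,b) and for every δ > 0 the infimum of h(x) − h(a) over [a+δ, b) is positive; and there is ω₀ > 0 such that ∫ₐᵇ |φ(x)| e^{−z h(x)} dx < ∞ for all real z ≥ ω₀. Then there exists δ₀ > 0 such that for every matrix A ∈ ℂ^{m×m} with σ(A) ⊆ {z ∈ ℂ : z ≠ 0 and |arg z| ≤ π/2 − Δ}, μ(A) ≥ η·ω(A), and ‖A⁻¹‖ ≤ δ₀, the integral ∫ₐᵇ φ(x) e^{−h(x)A} dx converges absolutely, i.e. ∫ₐᵇ |φ(x)| ‖e^{−h(x)A}‖ dx < ∞. -/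

import Mathlib

/-!
The sector condition and `‖A⁻¹‖ ≤ δ₀` put every eigenvalue of `A` in `{Re z ≥ sin Δ / δ₀}`, so
`ω(A) ≥ sin Δ / δ₀` and, by `μ(A) ≥ η ω(A)`, `μ(A) ≥ ω₀` once `δ₀ = η sin Δ / ω₀`. The energy
estimate `d/dt ‖e^{-tA} x‖² = -2 Re ⟪A e^{-tA} x, e^{-tA} x⟫ ≤ -2 μ(A) ‖e^{-tA} x‖²` gives
`‖e^{-tA}‖ ≤ e^{-t μ(A)}`, hence `‖e^{-h(x) A}‖ ≤ C e^{-ω₀ h(x)}` on `(a, b)` because `h(x) ≥ h(a)`,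
and the integrand is dominated by `C |φ(x)| e^{-ω₀ h(x)}`.
-/

open MeasureTheory Matrix
open scoped Matrix.Norms.L2Operator

noncomputable section

/-- Square complex matrices, with the operator 2-norm (scoped `Matrix.L2OpNorm`). -/
abbrev Mat (m : ℕ) := Matrix (Fin m) (Fin m) ℂ

instance {m : ℕ} : CStarAlgebra (Mat m) where

/-- `ω(A)`: the minimum of the real parts of the eigenvalues of `A`. -/
def omegaA {m : ℕ} (A : Mat m) : ℝ := sInf (Complex.re '' spectrum ℂ A)

/-- `μ(A)`: the minimum eigenvalue of the Hermitian matrix `A⁺ = (A + Aᴴ)/2`. -/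
def muA {m : ℕ} (A : Mat m) : ℝ :=
  sInf {x : ℝ | (x : ℂ) ∈ spectrum ℂ ((1 / 2 : ℂ) • (A + Aᴴ))}

/-- The fractional negative power `A^{-α} = Γ(α)⁻¹ ∫₀^∞ t^{α-1} e^{-tA} dt`. -/
def negPow {m : ℕ} (A : Mat m) (α : ℝ) : Mat m :=
  (Real.Gamma α)⁻¹ • ∫ t in Set.Ioi (0 : ℝ), t ^ (α - 1) • NormedSpace.exp ((-(t : ℂ)) • A)

open scoped InnerProductSpace

theorem norm_le_exp_mul_norm_of_dissipative {𝕜 E : Type*} [RCLike 𝕜] [NormedAddCommGroup E]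
    [InnerProductSpace 𝕜 E] [NormedSpace ℝ E] {u u' : ℝ → E} {c : ℝ}
    (hu : ∀ t, HasDerivAt u (u' t) t) (hdiss : ∀ t, c * ‖u t‖ ^ 2 ≤ -RCLike.re ⟪u' t, u t⟫_𝕜)
    {s : ℝ} (hs : 0 ≤ s) : ‖u s‖ ≤ Real.exp (-(s * c)) * ‖u 0‖ := by
  have hnorm_sq : ∀ t, HasDerivAt (fun t => ‖u t‖ ^ 2) (2 * RCLike.re ⟪u' t, u t⟫_𝕜) t := by
    intro t
    have h := RCLike.reCLM.hasFDerivAt.comp_hasDerivAt t ((hu t).inner 𝕜 (hu t))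
    simp only [Function.comp_def, RCLike.reCLM_apply, inner_self_eq_norm_sq, map_add] at h
    rwa [inner_re_symm (u t), ← two_mul] at h
  have hweighted : Antitone fun t => ‖u t‖ ^ 2 * Real.exp (2 * c * t) := by
    refine antitone_of_hasDerivAt_nonpos
      (fun t => (hnorm_sq t).mul ((hasDerivAt_id t).const_mul (2 * c)).exp) fun t => ?_
    have := mul_le_mul_of_nonneg_right (hdiss t) (Real.exp_pos (2 * c * t)).le
    simp only [id, Pi.zero_apply]
    linarith
  have hsq : ‖u s‖ ^ 2 ≤ (Real.exp (-(s * c)) * ‖u 0‖) ^ 2 := by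
    have hdecay : ‖u s‖ ^ 2 * Real.exp (2 * c * s) ≤ ‖u 0‖ ^ 2 := by
      simpa using hweighted hs
    calc ‖u s‖ ^ 2 = ‖u s‖ ^ 2 * Real.exp (2 * c * s) * Real.exp (-(2 * c * s)) := by
          rw [mul_assoc, ← Real.exp_add, add_neg_cancel, Real.exp_zero, mul_one]
      _ ≤ ‖u 0‖ ^ 2 * Real.exp (-(2 * c * s)) := by gcongr
      _ = (Real.exp (-(s * c)) * ‖u 0‖) ^ 2 := by
          rw [mul_pow, ← Real.exp_nat_mul]
          ring_nf
  exact le_of_sq_le_sq hsq (by positivity)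

theorem ContinuousLinearMap.norm_exp_neg_smul_le {E : Type*} [NormedAddCommGroup E]
    [InnerProductSpace ℂ E] [CompleteSpace E] {T : E →L[ℂ] E} {c : ℝ}
    (hT : ∀ x, c * ‖x‖ ^ 2 ≤ RCLike.re ⟪T x, x⟫_ℂ) {s : ℝ} (hs : 0 ≤ s) :
    ‖NormedSpace.exp ((-(s : ℂ)) • T)‖ ≤ Real.exp (-(s * c)) := by
  refine opNorm_le_bound _ (Real.exp_nonneg _) fun x => ?_
  have hcurve : ∀ t : ℝ, HasDerivAt (fun t : ℝ => NormedSpace.exp ((-(t : ℂ)) • T) x)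
      (-T (NormedSpace.exp ((-(t : ℂ)) • T) x)) t := by
    intro t
    have h := (hasDerivAt_exp_smul_const' T (-(t : ℂ))).scomp t
      (Complex.ofRealCLM.hasDerivAt (x := t)).neg
    convert ((ContinuousLinearMap.apply ℂ E x).restrictScalars ℝ).hasFDerivAt.comp_hasDerivAt t h
      using 1
    · funext t
      simp
    · simp
  simpa using norm_le_exp_mul_norm_of_dissipative (𝕜 := ℂ) hcurve
    (fun t => by simpa [inner_neg_left] using hT _) hs

lemma Complex.norm_mul_cos_le_re {z : ℂ} {θ : ℝ} (hz : |z.arg| ≤ θ) (hθ : θ ≤ Real.pi) :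
    ‖z‖ * Real.cos θ ≤ z.re := by
  rw [← Complex.norm_mul_cos_arg, ← Real.cos_abs z.arg]
  gcongr
  exact Real.cos_le_cos_of_nonneg_of_le_pi (abs_nonneg _) hθ hz

theorem spectrum.inv_norm_le_norm_inv {𝕜 𝔸 : Type*} [NontriviallyNormedField 𝕜] [NormedRing 𝔸]
    [NormedAlgebra 𝕜 𝔸] [CompleteSpace 𝔸] [NormOneClass 𝔸] {u : 𝔸ˣ} {z : 𝕜}
    (hz : z ∈ spectrum 𝕜 (u : 𝔸)) : ‖z‖⁻¹ ≤ ‖(↑u⁻¹ : 𝔸)‖ := by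
  have hz0 : z ≠ 0 := by
    rintro rfl
    exact spectrum.zero_notMem 𝕜 u.isUnit hz
  simpa using spectrum.norm_le_norm_of_mem
    (spectrum.inv_mem_iff.1 (show ((Units.mk0 z hz0 : 𝕜ˣ) : 𝕜) ∈ spectrum 𝕜 (u : 𝔸) from hz))

section MatrixExp

open scoped MatrixOrder

variable {m : ℕ}

lemma muA_smul_one_le (A : Mat m) : muA A • (1 : Mat m) ≤ (1 / 2 : ℂ) • (A + Aᴴ) := by
  have hH : IsSelfAdjoint ((1 / 2 : ℂ) • (A + Aᴴ)) :=
    (by simp [IsSelfAdjoint] : IsSelfAdjoint (1 / 2 : ℂ)).smul (.add_star_self A)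
  rw [← Algebra.algebraMap_eq_smul_one, algebraMap_le_iff_le_spectrum]
  intro x hx
  exact csInf_le ((finite_spectrum _).preimage Complex.ofReal_injective.injOn).bddBelow
    (by simpa [← spectrum.algebraMap_mem_iff ℂ] using hx)

lemma muA_mul_norm_sq_le (A : Mat m) (x : EuclideanSpace ℂ (Fin m)) :
    muA A * ‖x‖ ^ 2 ≤ RCLike.re ⟪toEuclideanCLM (n := Fin m) (𝕜 := ℂ) A x, x⟫_ℂ := by
  have hpos := (isPositive_toEuclideanLin_iff.mpr (le_iff.mp (muA_smul_one_le A))).2 x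
  have hμ : toEuclideanLin (muA A • (1 : Mat m)) x = (muA A : ℂ) • x := by
    rw [← Complex.coe_smul, map_smul]
    simp
  have hsymm := inner_re_symm (𝕜 := ℂ) x (toEuclideanLin A x)
  simp only [map_sub, map_smul, map_add, toEuclideanLin_conjTranspose_eq_adjoint,
    LinearMap.sub_apply, LinearMap.smul_apply, LinearMap.add_apply, hμ, inner_sub_left,
    inner_smul_left, inner_add_left, LinearMap.adjoint_inner_left,
    inner_self_eq_norm_sq_to_K] at hpos
  norm_num [Complex.mul_re, ← Complex.ofReal_pow] at hpos hsymm ⊢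
  change _ ≤ (⟪toEuclideanLin A x, x⟫_ℂ).re
  linarith

lemma norm_exp_neg_smul_le_exp_muA (A : Mat m) {s : ℝ} (hs : 0 ≤ s) :
    ‖NormedSpace.exp ((-(s : ℂ)) • A)‖ ≤ Real.exp (-(s * muA A)) := by
  have hcont : Continuous (toEuclideanCLM (n := Fin m) (𝕜 := ℂ)) :=
    LinearMap.continuous_of_finiteDimensional
      (toEuclideanCLM (n := Fin m) (𝕜 := ℂ)).toAlgEquiv.toLinearEquiv.toLinearMap
  let _ : NormedAlgebra ℚ (Mat m) := .restrictScalars ℚ ℂ _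
  rw [cstar_norm_def, NormedSpace.map_exp _ hcont, map_smul]
  exact ContinuousLinearMap.norm_exp_neg_smul_le (muA_mul_norm_sq_le A) hs

lemma norm_exp_neg_smul_le_mul_exp (A : Mat m) {c r t : ℝ} (hc : c ≤ muA A)
    (hrt : r ≤ t) :
    ‖NormedSpace.exp ((-(t : ℂ)) • A)‖ ≤
      ‖NormedSpace.exp ((-(r : ℂ)) • A)‖ * Real.exp (c * r) * Real.exp (-c * t) := by
  have hsplit : NormedSpace.exp ((-(t : ℂ)) • A) =
      NormedSpace.exp ((-((t - r : ℝ) : ℂ)) • A) * NormedSpace.exp ((-(r : ℂ)) • A) := by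
    let _ : NormedAlgebra ℚ (Mat m) := .restrictScalars ℚ ℂ _
    rw [← NormedSpace.exp_add_of_commute (((Commute.refl A).smul_left _).smul_right _), ← add_smul]
    push_cast
    ring_nf
  have hdecay : Real.exp (-((t - r) * muA A)) ≤ Real.exp (c * r) * Real.exp (-c * t) := by
    rw [← Real.exp_add, Real.exp_le_exp]
    nlinarith
  calc ‖NormedSpace.exp ((-(t : ℂ)) • A)‖
      ≤ ‖NormedSpace.exp ((-((t - r : ℝ) : ℂ)) • A)‖ * ‖NormedSpace.exp ((-(r : ℂ)) • A)‖ :=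
        hsplit ▸ norm_mul_le _ _
    _ ≤ Real.exp (c * r) * Real.exp (-c * t) * ‖NormedSpace.exp ((-(r : ℂ)) • A)‖ := by
        gcongr
        exact (norm_exp_neg_smul_le_exp_muA A (sub_nonneg.2 hrt)).trans hdecay
    _ = _ := by ring

lemma inv_norm_le_norm_inv_of_mem_spectrum {A : Mat m} (hA : IsUnit A) {z : ℂ}
    (hz : z ∈ spectrum ℂ A) : ‖z‖⁻¹ ≤ ‖A⁻¹‖ := by
  have : Nontrivial (Mat m) :=
    not_subsingleton_iff_nontrivial.1 fun _ => by simp [spectrum.of_subsingleton] at hz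
  obtain ⟨u, rfl⟩ := hA
  rw [← coe_units_inv]
  exact spectrum.inv_norm_le_norm_inv hz

lemma le_omegaA [Nonempty (Fin m)] {A : Mat m} {c : ℝ}
    (h : ∀ z ∈ spectrum ℂ A, c ≤ z.re) : c ≤ omegaA A :=
  le_csInf ((spectrum.nonempty A).image _) (Set.forall_mem_image.2 h)

lemma sin_div_le_re_of_mem_spectrum {A : Mat m} {Δ δ : ℝ} (hΔ : 0 ≤ Δ)
    (hsec : ∀ z ∈ spectrum ℂ A, z ≠ 0 ∧ |Complex.arg z| ≤ Real.pi / 2 - Δ) (hinv : ‖A⁻¹‖ ≤ δ)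
    {z : ℂ} (hz : z ∈ spectrum ℂ A) : Real.sin Δ / δ ≤ z.re := by
  obtain ⟨hz0, harg⟩ := hsec z hz
  have hA : IsUnit A := (spectrum.zero_notMem_iff ℂ).1 fun h0 => (hsec 0 h0).1 rfl
  have hsin : 0 ≤ Real.sin Δ :=
    Real.sin_nonneg_of_nonneg_of_le_pi hΔ (by linarith [abs_nonneg z.arg, Real.pi_pos])
  have hnorm : δ⁻¹ ≤ ‖z‖ := inv_le_of_inv_le₀ (norm_pos_iff.2 hz0)
    ((inv_norm_le_norm_inv_of_mem_spectrum hA hz).trans hinv)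
  calc Real.sin Δ / δ = δ⁻¹ * Real.cos (Real.pi / 2 - Δ) := by rw [Real.cos_pi_div_two_sub]; ring
    _ ≤ ‖z‖ * Real.cos (Real.pi / 2 - Δ) := by gcongr; rwa [Real.cos_pi_div_two_sub]
    _ ≤ z.re := Complex.norm_mul_cos_le_re harg (by linarith [Real.pi_pos])

end MatrixExp

section ExpWeights

variable {α : Type*} [MeasurableSpace α] {μ : Measure α} {f h : α → ℝ} {s t : ℝ}

lemma aemeasurable_mul_comp_of_aemeasurable_mul_exp {g : ℝ → ℝ} (hg : Measurable g)
    (hst : s ≠ t) (hs : AEMeasurable (fun x => f x * Real.exp (-s * h x)) μ)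
    (ht : AEMeasurable (fun x => f x * Real.exp (-t * h x)) μ) :
    AEMeasurable (fun x => f x * g (h x)) μ := by
  set p := fun x => f x * Real.exp (-s * h x)
  set q := fun x => f x * Real.exp (-t * h x)
  -- No measurability of `f` or `h` is assumed: off the zeros of `f`, `h` is read off from `p / q`.
  have hrecover : ∀ x, f x ≠ 0 → Real.log (p x / q x) / (t - s) = h x := fun x hfx => by
    simp only [p, q]
    rw [mul_div_mul_left _ _ hfx, ← Real.exp_sub, Real.log_exp]
    field_simp [sub_ne_zero.2 hst.symm]
    ring
  have hfg : (fun x => f x * g (h x)) =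
      fun x => p x * (g (Real.log (p x / q x) / (t - s)) *
        Real.exp (s * (Real.log (p x / q x) / (t - s)))) := by
    funext x
    rcases eq_or_ne (f x) 0 with hfx | hfx
    · simp [p, hfx]
    rw [hrecover x hfx, ← mul_assoc, mul_right_comm, mul_assoc (f x), ← Real.exp_add]
    simp
  rw [hfg]
  have hweight : Measurable fun τ => g τ * Real.exp (s * τ) := by fun_prop
  exact hs.mul (hweight.comp_aemeasurable
    ((Real.measurable_log.comp_aemeasurable (hs.div ht)).div_const _))

lemma integrable_mul_comp_of_norm_le_exp {g : ℝ → ℝ} (hg : Measurable g) (hst : s ≠ t)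
    (hs : Integrable (fun x => f x * Real.exp (-s * h x)) μ)
    (ht : AEMeasurable (fun x => f x * Real.exp (-t * h x)) μ) {C : ℝ}
    (hbound : ∀ᵐ x ∂μ, ‖g (h x)‖ ≤ C * Real.exp (-s * h x)) :
    Integrable (fun x => f x * g (h x)) μ := by
  refine (hs.norm.const_mul C).mono' (aemeasurable_mul_comp_of_aemeasurable_mul_exp hg hst
    hs.aemeasurable ht).aestronglyMeasurable ?_
  filter_upwards [hbound] with x hx
  rw [norm_mul, norm_mul, Real.norm_of_nonneg (Real.exp_pos _).le]
  nlinarith [norm_nonneg (f x), norm_nonneg (g (h x))]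

end ExpWeights

theorem laplace_integral_abs_convergent_general
    (Δ η : ℝ) (hΔ : 0 < Δ) (hΔ' : Δ < Real.pi / 2) (hη : 0 < η)
    (a : ℝ) (b : EReal)
    (h : ℝ → ℝ) (φ : ℝ → ℂ)
    -- condition (i)
    (hi1 : ∀ x : ℝ, a < x → (x : EReal) < b → h a < h x)
    -- condition (iv)
    (ω₀ : ℝ) (hω₀ : 0 < ω₀)
    (hiv : ∀ z : ℝ, ω₀ ≤ z →
      IntegrableOn (fun x => ‖φ x‖ * Real.exp (-z * h x))
        {x : ℝ | a < x ∧ (x : EReal) < b})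
    (m : ℕ) :
    ∃ δ₀ > (0 : ℝ), ∀ A : Mat m,
      (∀ z ∈ spectrum ℂ A, z ≠ 0 ∧ |Complex.arg z| ≤ Real.pi / 2 - Δ) →
      η * omegaA A ≤ muA A →
      ‖A⁻¹‖ ≤ δ₀ →
      IntegrableOn (fun x => ‖φ x‖ * ‖NormedSpace.exp ((-(h x : ℂ)) • A)‖)
        {x : ℝ | a < x ∧ (x : EReal) < b} := by
  have hsin : 0 < Real.sin Δ := Real.sin_pos_of_pos_of_lt_pi hΔ (by linarith [Real.pi_pos])
  refine ⟨η * Real.sin Δ / ω₀, by positivity, fun A hsec hημ hinv => ?_⟩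
  -- For `m = 0` the integrand vanishes, while `omegaA A` is the junk value `sInf ∅ = 0`.
  rcases isEmpty_or_nonempty (Fin m) with hm | hm
  · simp [IntegrableOn, Subsingleton.elim _ (0 : Mat m)]
  have hμ : ω₀ ≤ muA A :=
    calc ω₀ = η * (Real.sin Δ / (η * Real.sin Δ / ω₀)) := by field_simp
      _ ≤ η * omegaA A := by
        gcongr
        exact le_omegaA fun z hz => sin_div_le_re_of_mem_spectrum hΔ.le hsec hinv hz
      _ ≤ muA A := hημ
  have hexp : Continuous fun τ : ℝ => NormedSpace.exp ((-(τ : ℂ)) • A) :=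
    (continuous_iff_continuousAt.2 fun z => (hasDerivAt_exp_smul_const' A z).continuousAt).comp
      (by fun_prop)
  have hS : MeasurableSet {x : ℝ | a < x ∧ (x : EReal) < b} :=
    measurableSet_Ioi.inter (measurableSet_lt measurable_coe_real_ereal measurable_const)
  exact integrable_mul_comp_of_norm_le_exp (g := fun τ => ‖NormedSpace.exp ((-(τ : ℂ)) • A)‖)
    hexp.norm.measurable (s := ω₀) (t := ω₀ + 1) (by linarith) (hiv ω₀ le_rfl)
    (hiv _ (by linarith)).aemeasurable (ae_restrict_of_forall_mem hS fun x hx => by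
      rw [norm_norm]
      exact norm_exp_neg_smul_le_mul_exp A hμ (hi1 x hx.1 hx.2).le)

/-- Absolute convergence of the matrix Laplace integral (well-definedness claim in
Theorem 2.1 of the paper). -/
theorem laplace_integral_abs_convergent
    (Δ η : ℝ) (hΔ : 0 < Δ) (hΔ' : Δ < Real.pi / 2) (hη : 0 < η)
    (a : ℝ) (b : EReal) (hab : (a : EReal) < b)
    (h : ℝ → ℝ) (φ : ℝ → ℂ)
    -- condition (i)
    (hi1 : ∀ x : ℝ, a < x → (x : EReal) < b → h a < h x)
    (hi2 : ∀ δ > (0 : ℝ), ∃ ε > (0 : ℝ), ∀ x : ℝ, a + δ ≤ x → (x : EReal) < b → ε ≤ h x - h a)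
    -- condition (iv)
    (ω₀ : ℝ) (hω₀ : 0 < ω₀)
    (hiv : ∀ z : ℝ, ω₀ ≤ z →
      IntegrableOn (fun x => ‖φ x‖ * Real.exp (-z * h x))
        {x : ℝ | a < x ∧ (x : EReal) < b})
    (m : ℕ) :
    ∃ δ₀ > (0 : ℝ), ∀ A : Mat m,
      (∀ z ∈ spectrum ℂ A, z ≠ 0 ∧ |Complex.arg z| ≤ Real.pi / 2 - Δ) →
      η * omegaA A ≤ muA A →
      ‖A⁻¹‖ ≤ δ₀ →
      IntegrableOn (fun x => ‖φ x‖ * ‖NormedSpace.exp ((-(h x : ℂ)) • A)‖)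
        {x : ℝ | a < x ∧ (x : EReal) < b} :=
  laplace_integral_abs_convergent_general Δ η hΔ hΔ' hη a b h φ hi1 ω₀ hω₀ hiv m
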